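/- arXiv:2410.21761 — 3 statements merged into one kernel-verified Lean document; each statement's English description precedes it below -/
import Mathlib

section
/- Let R = ZMod(p^ℓ) with p prime and let G = GL₂(R), B the upper triangular invertible matrices. Every element of G lies in a double coset B·g·B where g is either the matrix [[1,0],[p^j·z,1]] for some 1 ≤ j ≤ ℓ and z ∈ R, or the matrix [[0,1],[1,0]]. -/
/-!
Over a local ring, an invertible matrix `[[a, b], [c, d]]` has `a` or `c` a unit, because
`a * d - b * c` is one. If `c` is a unit, multiplying by upper triangular matrices on both sides
turns it into `[[0, 1], [1, 0]]`. Otherwise `a` is a unit and the matrix is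
`[[1, 0], [c * a⁻¹, 1]]` times an upper triangular one, with `c * a⁻¹` a non-unit. In
`ZMod (p ^ ℓ)` the non-units are exactly the multiples of `p`, so that entry is `p * z`.
-/

open Matrix

section

variable {R : Type*} [CommRing R]

theorem Matrix.fin_two_eq_upper_mul_antidiag_mul_upper (a b d : R) (u : Rˣ) :
    !![a, b; (u : R), d] =
      !![b - a * ↑u⁻¹ * d, a * ↑u⁻¹; 0, 1] * !![0, 1; 1, 0] * !![(u : R), d; 0, 1] := by
  simp [mul_assoc]

theorem Matrix.fin_two_eq_lower_mul_upper (b c d : R) (u : Rˣ) :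
    !![(u : R), b; c, d] = !![1, 0; c * ↑u⁻¹, 1] * !![(u : R), b; 0, d - c * ↑u⁻¹ * b] := by
  simp [mul_assoc]

theorem Matrix.GeneralLinearGroup.exists_val_eq_of_val_eq_mul_mul {n : Type*} [Fintype n]
    [DecidableEq n] (g : GL n R) {X Y Z : Matrix n n R} (hg : g.val = X * Y * Z) :
    ∃ b₁ b₂ : GL n R, b₁.val = X ∧ b₂.val = Z := by
  have hdet : IsUnit (X.det * Y.det * Z.det) := by
    rw [← det_mul, ← det_mul, ← hg]
    exact (isUnit_iff_isUnit_det _).mp g.isUnit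
  exact ⟨(X.isUnit_iff_isUnit_det.mpr (isUnit_of_mul_isUnit_left
      (isUnit_of_mul_isUnit_left hdet))).unit,
    (Z.isUnit_iff_isUnit_det.mpr (isUnit_of_mul_isUnit_right hdet)).unit, rfl, rfl⟩

theorem IsLocalRing.isUnit_or_isUnit_of_isUnit_det_fin_two [IsLocalRing R] {a b c d : R}
    (h : IsUnit (!![a, b; c, d].det)) : IsUnit a ∨ IsUnit c := by
  rw [det_fin_two_of, sub_eq_add_neg] at h
  refine (isUnit_or_isUnit_of_isUnit_add h).imp isUnit_of_mul_isUnit_left fun hbc => ?_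
  exact isUnit_of_mul_isUnit_right (IsUnit.neg_iff _ |>.mp hbc)

theorem IsLocalRing.exists_upper_mul_mul_upper [IsLocalRing R] (g : GL (Fin 2) R) :
    ∃ b₁ b₂ : GL (Fin 2) R, b₁.val 1 0 = 0 ∧ b₂.val 1 0 = 0 ∧
      ((∃ c, ¬IsUnit c ∧ g.val = b₁.val * !![1, 0; c, 1] * b₂.val) ∨
        g.val = b₁.val * !![0, 1; 1, 0] * b₂.val) := by
  obtain ⟨a, b, c, d, hg⟩ : ∃ a b c d, g.val = !![a, b; c, d] :=
    ⟨_, _, _, _, (etaExpand_eq g.val).symm⟩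
  have hdet : IsUnit (!![a, b; c, d].det) := hg ▸ (isUnit_iff_isUnit_det _).mp g.isUnit
  by_cases hc : IsUnit c
  · obtain ⟨u, rfl⟩ := hc
    have hw := hg.trans (fin_two_eq_upper_mul_antidiag_mul_upper a b d u)
    obtain ⟨b₁, b₂, h₁, h₂⟩ := GeneralLinearGroup.exists_val_eq_of_val_eq_mul_mul g hw
    exact ⟨b₁, b₂, by simp [h₁], by simp [h₂], Or.inr (by rw [h₁, h₂, hw])⟩
  · obtain ⟨u, rfl⟩ := (isUnit_or_isUnit_of_isUnit_det_fin_two hdet).resolve_right hc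
    have hl := hg.trans (fin_two_eq_lower_mul_upper b c d u)
    rw [← one_mul !![1, 0; c * ↑u⁻¹, 1]] at hl
    obtain ⟨b₁, b₂, h₁, h₂⟩ := GeneralLinearGroup.exists_val_eq_of_val_eq_mul_mul g hl
    refine ⟨b₁, b₂, by simp [h₁], by simp [h₂], Or.inl ⟨c * ↑u⁻¹, ?_, by rw [h₁, h₂, hl]⟩⟩
    exact fun h => hc (by simpa using h.mul u.isUnit)

end

theorem ZMod.natCast_dvd_iff_not_isUnit {p ℓ : ℕ} (hp : p.Prime) (hℓ : ℓ ≠ 0)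
    (x : ZMod (p ^ ℓ)) : (p : ZMod (p ^ ℓ)) ∣ x ↔ ¬IsUnit x := by
  refine ⟨fun hx hu => prime_natCast_not_isUnit_pow hp (Nat.pos_of_ne_zero hℓ)
    (isUnit_of_dvd_unit hx hu), fun hx => ?_⟩
  have : NeZero (p ^ ℓ) := ⟨pow_ne_zero ℓ hp.ne_zero⟩
  obtain ⟨n, rfl⟩ := ZMod.natCast_zmod_surjective x
  rw [isUnit_natCast_iff_not_dvd_pow hp (Nat.pos_of_ne_zero hℓ), not_not] at hx
  exact Nat.cast_dvd_cast hx

theorem ZMod.isLocalRing_primePow {p ℓ : ℕ} (hp : p.Prime) (hℓ : ℓ ≠ 0) :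
    IsLocalRing (ZMod (p ^ ℓ)) :=
  haveI : Nontrivial (ZMod (p ^ ℓ)) :=
    ZMod.nontrivial_iff.mpr (Nat.one_lt_pow hℓ hp.one_lt).ne'
  .of_nonunits_add fun a b ha hb => by
    simp only [mem_nonunits_iff, ← natCast_dvd_iff_not_isUnit hp hℓ] at *
    exact dvd_add ha hb

/-- Double coset decomposition of `GL₂(ZMod (p^ℓ))` by its Borel subgroup: every
element lies in `B·g·B` where `g = [[1,0],[p^j·z,1]]` for some `1 ≤ j ≤ ℓ`, `z`,
or `g = [[0,1],[1,0]]`. -/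
theorem stmt_8 (p ℓ : ℕ) (hp : p.Prime) (g : GL (Fin 2) (ZMod (p ^ ℓ))) :
    ∃ b₁ b₂ : GL (Fin 2) (ZMod (p ^ ℓ)),
      b₁.val 1 0 = 0 ∧ b₂.val 1 0 = 0 ∧
      ((∃ j : ℕ, ∃ z : ZMod (p ^ ℓ), 1 ≤ j ∧ j ≤ ℓ ∧
          g.val = b₁.val * !![1, 0; (p : ZMod (p ^ ℓ)) ^ j * z, 1] * b₂.val)
        ∨ g.val = b₁.val * !![0, 1; 1, 0] * b₂.val) := by
  rcases eq_or_ne ℓ 0 with rfl | hℓ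
  · have : Subsingleton (ZMod (p ^ 0)) := by rw [pow_zero]; infer_instance
    exact ⟨1, 1, Subsingleton.elim _ _, Subsingleton.elim _ _, Or.inr (Subsingleton.elim _ _)⟩
  have := ZMod.isLocalRing_primePow hp hℓ
  obtain ⟨b₁, b₂, h₁, h₂, ⟨c, hc, hg⟩ | hg⟩ := IsLocalRing.exists_upper_mul_mul_upper g
  · obtain ⟨z, rfl⟩ := (ZMod.natCast_dvd_iff_not_isUnit hp hℓ c).mpr hc
    exact ⟨b₁, b₂, h₁, h₂, Or.inl ⟨1, z, le_rfl, Nat.one_le_iff_ne_zero.mpr hℓ, by rwa [pow_one]⟩⟩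
  · exact ⟨b₁, b₂, h₁, h₂, Or.inr hg⟩
end

section
/- Let R = ZMod(p^ℓ), p prime, and let Z U denote the subgroup of GL₂(R) of matrices of the form [[a, x], [0, a]] with a a unit, and let B be the upper triangular invertible matrices. For g = [[1,0],[p^j·z,1]] with z a unit and 0 ≤ j, the intersection g(ZU)g⁻¹ ∩ B equals the set of matrices a·I + [[−p^j·x·z, x],[0, p^j·x·z]] where a is a unit and x ∈ R satisfies p^{max(ℓ−2j,0)} divides x. For g = [[0,1],[1,0]], the intersection g(ZU)g⁻¹ ∩ B is exactly the center Z (invertible scalar matrices). -/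
/-!
Conjugating `[[a, u], [0, a]]` by `g = [[1, 0], [c, 1]]` gives
`[[a - c u, u], [-c² u, a + c u]]`, which lies in the Borel exactly when `c² u = 0`; the
diagonal entries are then automatically units, since `(c u)² = 0` makes `c u` nilpotent.
For `c = p^j z` with `z` a unit, `c² u = 0` in `ZMod (p^ℓ)` means `p^(2j) u = 0`, i.e.
`p^(ℓ - 2j) ∣ u`. Conjugating by the Weyl element `[[0, 1], [1, 0]]` transposes the
unipotent part, so only the scalars survive.
-/

open Matrix

theorem ZMod.pow_mul_eq_zero_iff_dvd {p : ℕ} (hp : p ≠ 0) (ℓ k : ℕ) (x : ZMod (p ^ ℓ)) :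
    (p : ZMod (p ^ ℓ)) ^ k * x = 0 ↔ (p : ZMod (p ^ ℓ)) ^ (ℓ - k) ∣ x := by
  have : NeZero (p ^ ℓ) := ⟨pow_ne_zero _ hp⟩
  constructor
  · intro h
    rcases le_or_gt ℓ k with hℓk | hkℓ
    · simp [Nat.sub_eq_zero_of_le hℓk]
    have hdvd : p ^ k * p ^ (ℓ - k) ∣ p ^ k * x.val := by
      rw [← pow_add, Nat.add_sub_cancel' hkℓ.le, ← ZMod.natCast_eq_zero_iff]
      push_cast
      rwa [ZMod.natCast_zmod_val]
    have := Nat.cast_dvd_cast (α := ZMod (p ^ ℓ))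
      (Nat.dvd_of_mul_dvd_mul_left (pow_pos (Nat.pos_of_ne_zero hp) k) hdvd)
    simpa using this
  · rintro ⟨y, rfl⟩
    have hpℓ : (p : ZMod (p ^ ℓ)) ^ ℓ = 0 := by
      rw [← Nat.cast_pow, ZMod.natCast_self]
    rw [← mul_assoc, ← pow_add, pow_eq_zero_of_le (by omega) hpℓ, zero_mul]

section TwoByTwo

def scalarUnipotent (R : Type*) [Semiring R] : Set (Matrix (Fin 2) (Fin 2) R) :=
  {m | ∃ a u : R, IsUnit a ∧ m = !![a, u; 0, a]}

def upperBorel (R : Type*) [Semiring R] : Set (Matrix (Fin 2) (Fin 2) R) :=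
  {m | IsUnit (m 0 0) ∧ IsUnit (m 1 1) ∧ m 1 0 = 0}

variable {R : Type*}

theorem smul_one_fin_two [Semiring R] (a : R) :
    a • (1 : Matrix (Fin 2) (Fin 2) R) = !![a, 0; 0, a] := by
  rw [smul_one_eq_diagonal, diagonal_fin_two]

theorem smul_one_add_fin_two [Ring R] (a x y : R) :
    a • (1 : Matrix (Fin 2) (Fin 2) R) + !![-y, x; 0, y] = !![a - y, x; 0, a + y] := by
  rw [smul_one_fin_two]
  ext i k
  fin_cases i <;> fin_cases k <;> simp [sub_eq_add_neg]

theorem lowerUnipotent_conj_fin_two [CommRing R] (c a u : R) :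
    !![1, 0; c, 1] * !![a, u; 0, a] * !![1, 0; -c, 1]
      = !![a - c * u, u; -(c * c * u), a + c * u] := by
  rw [mul_fin_two, mul_fin_two]
  ext i k
  fin_cases i <;> fin_cases k <;> simp <;> ring

theorem swap_conj_fin_two [Semiring R] (a u : R) :
    !![0, 1; 1, 0] * !![a, u; 0, a] * !![(0 : R), 1; 1, 0] = !![a, 0; u, a] := by
  simp

theorem lowerUnipotent_conj_scalarUnipotent_inter_upperBorel [CommRing R] (c : R) :
    (fun m => !![1, 0; c, 1] * m * !![1, 0; -c, 1]) '' scalarUnipotent R ∩ upperBorel R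
      = {m | ∃ a u : R, IsUnit a ∧ c * c * u = 0 ∧
          m = a • (1 : Matrix (Fin 2) (Fin 2) R) + !![-(c * u), u; 0, c * u]} := by
  ext m
  simp only [scalarUnipotent, upperBorel, Set.mem_inter_iff, Set.mem_image, Set.mem_ofPred_eq,
    smul_one_add_fin_two]
  constructor
  · rintro ⟨⟨_, ⟨a, u, ha, rfl⟩, rfl⟩, -, -, h10⟩
    rw [lowerUnipotent_conj_fin_two] at h10
    have hccu : c * c * u = 0 := by simpa using h10
    refine ⟨a, u, ha, hccu, ?_⟩
    rw [lowerUnipotent_conj_fin_two, hccu, neg_zero]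
  · rintro ⟨a, u, ha, hccu, rfl⟩
    have hnil : IsNilpotent (c * u) := ⟨2, by linear_combination u * hccu⟩
    refine ⟨⟨!![a, u; 0, a], ⟨a, u, ha, rfl⟩, ?_⟩, ?_, ?_, rfl⟩
    · rw [lowerUnipotent_conj_fin_two, hccu, neg_zero]
    · simpa [sub_eq_add_neg] using hnil.neg.isUnit_add_left_of_commute ha (Commute.all _ _)
    · simpa using hnil.isUnit_add_left_of_commute ha (Commute.all _ _)

theorem swap_conj_scalarUnipotent_inter_upperBorel [Semiring R] :
    (fun m => !![0, 1; 1, 0] * m * !![(0 : R), 1; 1, 0]) '' scalarUnipotent R ∩ upperBorel R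
      = {m | ∃ a : R, IsUnit a ∧ m = a • (1 : Matrix (Fin 2) (Fin 2) R)} := by
  ext m
  simp only [scalarUnipotent, upperBorel, Set.mem_inter_iff, Set.mem_image, Set.mem_ofPred_eq,
    smul_one_fin_two]
  constructor
  · rintro ⟨⟨_, ⟨a, u, ha, rfl⟩, rfl⟩, -, -, h10⟩
    rw [swap_conj_fin_two] at h10 ⊢
    obtain rfl : u = 0 := by simpa using h10
    exact ⟨a, ha, rfl⟩
  · rintro ⟨a, ha, rfl⟩
    exact ⟨⟨!![a, 0; 0, a], ⟨a, 0, ha, rfl⟩, swap_conj_fin_two a 0⟩, by simpa, by simpa, rfl⟩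

end TwoByTwo

/-- In `R = ZMod (p^ℓ)` with `ZU = {[[a,u],[0,a]] : a unit}` and `B` the Borel of
upper triangular matrices with unit diagonal: for `g = [[1,0],[p^j·z,1]]` with `z`
a unit, `g(ZU)g⁻¹ ∩ B` consists of the matrices `a•I + [[−p^j x z, x],[0, p^j x z]]`
with `a` a unit and `p^{max(ℓ−2j,0)} ∣ x`; and for `g = [[0,1],[1,0]]`,
`g(ZU)g⁻¹ ∩ B` is exactly the set of invertible scalar matrices. -/
theorem stmt_9 (p ℓ j : ℕ) (hp : p.Prime) (z : ZMod (p ^ ℓ)) (hz : IsUnit z) :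
    ((fun m : Matrix (Fin 2) (Fin 2) (ZMod (p ^ ℓ)) =>
        !![1, 0; (p : ZMod (p ^ ℓ)) ^ j * z, 1] * m *
          !![1, 0; -((p : ZMod (p ^ ℓ)) ^ j * z), 1]) ''
        {m | ∃ a u : ZMod (p ^ ℓ), IsUnit a ∧ m = !![a, u; 0, a]}
      ∩ {m | IsUnit (m 0 0) ∧ IsUnit (m 1 1) ∧ m 1 0 = 0}
      = {m | ∃ a x : ZMod (p ^ ℓ), IsUnit a ∧
          ((p : ZMod (p ^ ℓ)) ^ (max (ℓ - 2 * j) 0) ∣ x) ∧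
          m = a • (1 : Matrix (Fin 2) (Fin 2) (ZMod (p ^ ℓ)))
            + !![-((p : ZMod (p ^ ℓ)) ^ j * x * z), x;
                 0, (p : ZMod (p ^ ℓ)) ^ j * x * z]})
    ∧
    ((fun m : Matrix (Fin 2) (Fin 2) (ZMod (p ^ ℓ)) =>
        !![0, 1; 1, 0] * m * !![(0 : ZMod (p ^ ℓ)), 1; 1, 0]) ''
        {m | ∃ a u : ZMod (p ^ ℓ), IsUnit a ∧ m = !![a, u; 0, a]}
      ∩ {m | IsUnit (m 0 0) ∧ IsUnit (m 1 1) ∧ m 1 0 = 0}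
      = {m | ∃ a : ZMod (p ^ ℓ), IsUnit a ∧
          m = a • (1 : Matrix (Fin 2) (Fin 2) (ZMod (p ^ ℓ)))}) := by
  refine ⟨?_, swap_conj_scalarUnipotent_inter_upperBorel⟩
  have hkernel (x : ZMod (p ^ ℓ)) :
      (p ^ j * z) * (p ^ j * z) * x = 0 ↔ (p : ZMod (p ^ ℓ)) ^ (max (ℓ - 2 * j) 0) ∣ x := by
    rw [show (p ^ j * z) * (p ^ j * z) * x = (z * z) * (p ^ (2 * j) * x) by ring,
      (hz.mul hz).mul_right_eq_zero, max_eq_left (Nat.zero_le _),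
      ZMod.pow_mul_eq_zero_iff_dvd hp.ne_zero]
  refine (lowerUnipotent_conj_scalarUnipotent_inter_upperBorel _).trans ?_
  simp only [hkernel]
  simp only [mul_right_comm _ z]
end

section
/- Let R = ZMod(p^ℓ) with p an odd prime and ℓ ≥ 2, let t ≤ ℓ − 2, fix λ ∈ R, and consider the set S of matrices [[a, b], [p^{ℓ−t}, λ−a]] over R with λ − 2a ∈ (p) and b a unit. Then any maximal collection of pairwise non-conjugate (under GL₂(R)-conjugation) matrices in S has cardinality at most p^{ℓ−2}. -/
/-!
A matrix in `S` has unit upper-right entry, so it is conjugate to the companion matrix of its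
characteristic polynomial `X² - λX + det`; with `λ` fixed, pairwise non-conjugate members of `S`
therefore have distinct determinants. Since `λ - 2a ∈ (p)` and the lower-left entry lies in `(p²)`,
minus the discriminant, `4 det - λ²`, lies in `(p²)`, which has `p^{ℓ-2}` elements, and `4` is a unit
because `p` is odd.
-/

open Matrix Finset

namespace Matrix

variable {R : Type*} [CommRing R]

theorem isConj_companion_of_isUnit_apply_zero_one {A : Matrix (Fin 2) (Fin 2) R}
    (hA : IsUnit (A 0 1)) : IsConj A !![0, -A.det; 1, A.trace] := by
  obtain ⟨a, b, c, d, rfl⟩ : ∃ a b c d : R, A = !![a, b; c, d] := ⟨_, _, _, _, eta_fin_two A⟩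
  have hb : IsUnit b := by simpa using hA
  have hP : IsUnit !![0, b; 1, d] := by
    rw [isUnit_iff_isUnit_det, det_fin_two_of]
    simpa using hb
  refine IsConj.symm ⟨hP.unit, ?_⟩
  rw [SemiconjBy, IsUnit.unit_spec, det_fin_two_of, trace_fin_two_of, mul_fin_two, mul_fin_two]
  ext i j
  fin_cases i <;> fin_cases j <;> simp <;> ring

theorem injOn_det_of_pairwise_not_isConj {S : Set (Matrix (Fin 2) (Fin 2) R)} (lam : R)
    (htrace : ∀ A ∈ S, A.trace = lam) (hunit : ∀ A ∈ S, IsUnit (A 0 1))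
    (hS : S.Pairwise fun A D ↦ ¬IsConj A D) : S.InjOn det := by
  intro A hA D hD hdet
  by_contra hne
  have hAc := isConj_companion_of_isUnit_apply_zero_one (hunit A hA)
  have hDc := isConj_companion_of_isUnit_apply_zero_one (hunit D hD)
  rw [htrace A hA, hdet] at hAc
  rw [htrace D hD] at hDc
  exact hS hA hD hne (hAc.trans hDc.symm)

theorem four_mul_det_fin_two_sub_sq (a b c lam : R) :
    4 * !![a, b; c, lam - a].det - lam ^ 2 = -((lam - 2 * a) ^ 2 + 4 * b * c) := by
  rw [det_fin_two_of]
  ring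

end Matrix

namespace ZMod

theorem isUnit_four_of_odd {n : ℕ} (hn : Odd n) : IsUnit (4 : ZMod n) := by
  have : Nat.Coprime (2 ^ 2) n := (Nat.coprime_two_left.mpr hn).pow_left 2
  simpa using (isUnit_iff_coprime _ _).mpr this

theorem card_image_natCast_mul_le (n k m : ℕ) [NeZero n] (hn : n = k * m) :
    (univ.image fun w : ZMod n ↦ (k : ZMod n) * w).card ≤ m := by
  have : NeZero m := ⟨right_ne_zero_of_mul (hn ▸ NeZero.ne n)⟩
  have hperiod (a : ℕ) : (k : ZMod n) * ((a % m : ℕ) : ZMod n) = k * a := by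
    rw [← Nat.cast_mul, ← Nat.cast_mul, natCast_eq_natCast_iff', hn,
      Nat.mul_mod_mul_left, Nat.mul_mod_mul_left, Nat.mod_mod]
  calc (univ.image fun w : ZMod n ↦ (k : ZMod n) * w).card
      ≤ (univ.image fun z : ZMod m ↦ (k : ZMod n) * (z.val : ZMod n)).card := by
        refine card_le_card fun x hx ↦ ?_
        obtain ⟨w, -, rfl⟩ := mem_image.mp hx
        refine mem_image.mpr ⟨w.val, mem_univ _, ?_⟩
        rw [val_natCast, hperiod, natCast_zmod_val]
    _ ≤ m := card_image_le.trans (by rw [card_univ, ZMod.card])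

end ZMod

theorem stmt_16_general (p ℓ t : ℕ) (hodd : Odd p) (hℓ : 2 ≤ ℓ)
    (ht : t ≤ ℓ - 2) (lam : ZMod (p ^ ℓ))
    (M : Finset (Matrix (Fin 2) (Fin 2) (ZMod (p ^ ℓ))))
    (hS : ∀ A ∈ M, ∃ a b : ZMod (p ^ ℓ), IsUnit b ∧
        (∃ c : ZMod (p ^ ℓ), lam - 2 * a = (p : ZMod (p ^ ℓ)) * c) ∧
        A = !![a, b; (p : ZMod (p ^ ℓ)) ^ (ℓ - t), lam - a])
    (hpair : ∀ A ∈ M, ∀ D ∈ M, A ≠ D →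
        ¬ ∃ g : GL (Fin 2) (ZMod (p ^ ℓ)), g.val * A * (g⁻¹).val = D) :
    M.card ≤ p ^ (ℓ - 2) := by
  have : NeZero (p ^ ℓ) := ⟨pow_ne_zero _ hodd.pos.ne'⟩
  have hdet : Set.InjOn det (M : Set (Matrix (Fin 2) (Fin 2) (ZMod (p ^ ℓ)))) := by
    refine injOn_det_of_pairwise_not_isConj lam (fun A hA ↦ ?_) (fun A hA ↦ ?_)
      fun A hA D hD hne ⟨g, hg⟩ ↦ hpair A hA D hD hne ⟨g, (Units.mul_inv_eq_iff_eq_mul g).mpr hg⟩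
    · obtain ⟨a, b, -, -, rfl⟩ := hS A hA
      simp [trace_fin_two_of]
    · obtain ⟨a, b, hb, -, rfl⟩ := hS A hA
      simpa using hb
  have hdisc : ∀ A ∈ M, 4 * A.det - lam ^ 2 ∈
      univ.image fun w : ZMod (p ^ ℓ) ↦ ((p ^ 2 : ℕ) : ZMod (p ^ ℓ)) * w := by
    intro A hA
    obtain ⟨a, b, -, ⟨e, he⟩, rfl⟩ := hS A hA
    rw [four_mul_det_fin_two_sub_sq, he, ← pow_mul_pow_sub _ (show 2 ≤ ℓ - t by omega)]
    exact mem_image.mpr ⟨-(e ^ 2 + 4 * b * p ^ (ℓ - t - 2)), mem_univ _, by push_cast; ring⟩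
  have hdisc_inj : Function.Injective fun x : ZMod (p ^ ℓ) ↦ 4 * x - lam ^ 2 :=
    sub_left_injective.comp (ZMod.isUnit_four_of_odd hodd.pow).mul_right_injective
  calc M.card ≤ _ := card_le_card_of_injOn _ hdisc (hdisc_inj.comp_injOn hdet)
    _ ≤ p ^ (ℓ - 2) := ZMod.card_image_natCast_mul_le _ _ _ (pow_mul_pow_sub p hℓ).symm

/-- Lemma 3.9: in `R = ZMod (p^ℓ)` (`ℓ ≥ 2`, `t ≤ ℓ − 2`, `λ` fixed), any collection
of pairwise non-conjugate matrices of the form `[[a, b], [p^{ℓ−t}, λ−a]]` with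
`λ − 2a ∈ (p)` and `b` a unit has cardinality at most `p^{ℓ−2}`. -/
theorem stmt_16 (p ℓ t : ℕ) (hp : p.Prime) (hodd : Odd p) (hℓ : 2 ≤ ℓ)
    (ht : t ≤ ℓ - 2) (lam : ZMod (p ^ ℓ))
    (M : Finset (Matrix (Fin 2) (Fin 2) (ZMod (p ^ ℓ))))
    (hS : ∀ A ∈ M, ∃ a b : ZMod (p ^ ℓ), IsUnit b ∧
        (∃ c : ZMod (p ^ ℓ), lam - 2 * a = (p : ZMod (p ^ ℓ)) * c) ∧
        A = !![a, b; (p : ZMod (p ^ ℓ)) ^ (ℓ - t), lam - a])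
    (hpair : ∀ A ∈ M, ∀ D ∈ M, A ≠ D →
        ¬ ∃ g : GL (Fin 2) (ZMod (p ^ ℓ)), g.val * A * (g⁻¹).val = D) :
    M.card ≤ p ^ (ℓ - 2) :=
  stmt_16_general p ℓ t hodd hℓ ht lam M hS hpair
end
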